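/- For every α > 0 there are a constant c > 0 depending only on α and an absolute constant d0 ≥ 3 such that for all d ≥ d0, all σ > 0, and all integers s with 1 ≤ s ≤ ⌊√(d log d/2)⌋ + 1: sup_{θ ∈ Θ_s} E_θ[(L̂'_s(y) − L(θ))⁴] ≤ c σ⁴ d⁴ (log d)². -/

import Mathlib

open MeasureTheory ProbabilityTheory

/-- Law of `y = θ + σ·ξ` with `ξ` i.i.d. standard normal: the product of Gaussians `N(θ j, σ²)`. -/
noncomputable def gaussMeasure (d : ℕ) (θ : Fin d → ℝ) (σ : ℝ) : Measure (Fin d → ℝ) :=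
  Measure.pi fun j => gaussianReal (θ j) (Real.toNNReal (σ ^ 2))

/-- The sparsity class `Θ_s`: vectors with at most `s` nonzero coordinates. -/
def Theta (d s : ℕ) : Set (Fin d → ℝ) := {θ | {j | θ j ≠ 0}.ncard ≤ s}

/-- The linear functional `L(θ) = ∑ θ_j`. -/
noncomputable def Lfun (d : ℕ) (θ : Fin d → ℝ) : ℝ := ∑ j, θ j

/-- The rate `Φ^L(σ, s) = σ² s² log(1 + d (log d) / s²)`. -/
noncomputable def PhiL (d : ℕ) (σ : ℝ) (s : ℕ) : ℝ :=
  σ ^ 2 * (s : ℝ) ^ 2 * Real.log (1 + (d : ℝ) * Real.log d / (s : ℝ) ^ 2)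

/-- The variance estimator `σ̂ = 9 (⌊d/2⌋⁻¹ ∑_{j ≤ d/2} y_(j)²)^{1/2}`, where the sum of the
`⌊d/2⌋` smallest among `y_1², …, y_d²` is expressed as the minimum over all subsets `G` of
cardinality `⌊d/2⌋` of `∑_{i ∈ G} y_i²`. -/
noncomputable def sigmahat (d : ℕ) (y : Fin d → ℝ) : ℝ :=
  9 * Real.sqrt (((d / 2 : ℕ) : ℝ)⁻¹ *
    sInf {x : ℝ | ∃ G : Finset (Fin d), G.card = d / 2 ∧ x = ∑ i ∈ G, (y i) ^ 2})

/-- The non-adaptive estimators `L̂'_s` (unknown `σ`, plug-in `σ̂`). -/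
noncomputable def LhatS' (d : ℕ) (α : ℝ) (s : ℕ) (y : Fin d → ℝ) : ℝ :=
  if (s : ℝ) ≤ Real.sqrt ((d : ℝ) * Real.log d / 2) then
    ∑ j, if α * (sigmahat d y) ^ 2 * Real.log (1 + (d : ℝ) * Real.log d / (s : ℝ) ^ 2) < (y j) ^ 2
      then y j else 0
  else ∑ j, y j

/-! Write `y = θ + σ ξ`. Whether or not it thresholds, `L̂'_s − L(θ)` is the noise sum
`∑ (y_j − θ_j)` plus a bias of at most `√t` per coordinate, where the threshold is
`t = α σ̂² log(1 + d log d / s²) ≤ 2 α σ̂² log d`. For `d ≥ 256` we have `s + ⌊d/2⌋ ≤ d`, so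
some `⌊d/2⌋` coordinates of `θ` vanish, and `σ̂²` is at most `81` times the mean of `y_i²` over them, which
is pure noise. Hence `(L̂'_s − L)⁴` is bounded pointwise by a combination of noise fourth powers
with weights `O(d⁴ log² d)` in total, and each of those has expectation `σ⁴ E ξ⁴`. -/

open Finset
open scoped NNReal

lemma pow_four_add_le (a b : ℝ) : (a + b) ^ 4 ≤ 8 * (a ^ 4 + b ^ 4) := by
  have heven : Even 4 := by decide
  calc (a + b) ^ 4 = |a + b| ^ 4 := (heven.pow_abs _).symm
    _ ≤ (|a| + |b|) ^ 4 := by gcongr; exact abs_add_le a b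
    _ ≤ 2 ^ 3 * (|a| ^ 4 + |b| ^ 4) := add_pow_le (abs_nonneg a) (abs_nonneg b) 4
    _ = 8 * (a ^ 4 + b ^ 4) := by simp only [heven.pow_abs]; norm_num

lemma pow_sum_le_card_pow_mul_sum_pow_of_odd {ι : Type*} (s : Finset ι) (f : ι → ℝ) {n : ℕ}
    (hn : Odd n) : (∑ i ∈ s, f i) ^ (n + 1) ≤ (#s : ℝ) ^ n * ∑ i ∈ s, f i ^ (n + 1) := by
  have heven : Even (n + 1) := hn.add_one
  calc (∑ i ∈ s, f i) ^ (n + 1) = |∑ i ∈ s, f i| ^ (n + 1) := (heven.pow_abs _).symm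
    _ ≤ (∑ i ∈ s, |f i|) ^ (n + 1) := by gcongr; exact abs_sum_le_sum_abs f s
    _ ≤ (#s : ℝ) ^ n * ∑ i ∈ s, |f i| ^ (n + 1) :=
      pow_sum_le_card_mul_sum_pow (fun i _ => abs_nonneg (f i)) n
    _ = (#s : ℝ) ^ n * ∑ i ∈ s, f i ^ (n + 1) := by simp only [heven.pow_abs]

lemma abs_ite_lt_sq_sub_le (t x : ℝ) : |(if t < x ^ 2 then x else 0) - x| ≤ √t := by
  split_ifs with h
  · simp [Real.sqrt_nonneg]
  · rw [zero_sub, abs_neg, ← Real.sqrt_sq_eq_abs]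
    exact Real.sqrt_le_sqrt (not_lt.mp h)

lemma pow_four_sum_ite_lt_sq_sub_le {ι : Type*} [Fintype ι] (t : ℝ) (y θ : ι → ℝ) :
    ((∑ j, if t < y j ^ 2 then y j else 0) - ∑ j, θ j) ^ 4
      ≤ 8 * ((Fintype.card ι : ℝ) ^ 3 * ∑ j, (y j - θ j) ^ 4
        + (Fintype.card ι : ℝ) ^ 4 * t ^ 2) := by
  set n : ℝ := (Fintype.card ι : ℝ)
  have hsplit : (∑ j, if t < y j ^ 2 then y j else 0) - ∑ j, θ j
      = ∑ j, (y j - θ j) + ∑ j, ((if t < y j ^ 2 then y j else 0) - y j) := by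
    rw [← sum_sub_distrib, ← sum_add_distrib]
    exact sum_congr rfl fun j _ => by ring
  have hbias : |∑ j, ((if t < y j ^ 2 then y j else 0) - y j)| ≤ n * √t :=
    calc _ ≤ ∑ j, |(if t < y j ^ 2 then y j else 0) - y j| := abs_sum_le_sum_abs _ _
      _ ≤ ∑ _j : ι, √t := sum_le_sum fun j _ => abs_ite_lt_sq_sub_le t (y j)
      _ = n * √t := by simp [n]
  have hbias4 : (∑ j, ((if t < y j ^ 2 then y j else 0) - y j)) ^ 4 ≤ n ^ 4 * t ^ 2 := by
    rw [← (by decide : Even 4).pow_abs]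
    calc _ ≤ (n * √t) ^ 4 := by gcongr
      _ = n ^ 4 * (√t ^ 2) ^ 2 := by ring
      _ ≤ n ^ 4 * t ^ 2 := by
        gcongr ?_ * ?_
        rcases le_total 0 t with ht | ht
        · rw [Real.sq_sqrt ht]
        · rw [Real.sqrt_eq_zero'.mpr ht]; norm_num [sq_nonneg]
  rw [hsplit]
  refine (pow_four_add_le _ _).trans ?_
  gcongr
  simpa [n] using
    pow_sum_le_card_pow_mul_sum_pow_of_odd univ (fun j => y j - θ j) (n := 3) (by decide)

lemma sq_sigmahat_le {d : ℕ} (y : Fin d → ℝ) {G : Finset (Fin d)} (hG : #G = d / 2) :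
    sigmahat d y ^ 2 ≤ 81 * ((∑ i ∈ G, y i ^ 2) / #G) := by
  set S := {x : ℝ | ∃ G : Finset (Fin d), #G = d / 2 ∧ x = ∑ i ∈ G, y i ^ 2}
  have hSG : ∑ i ∈ G, y i ^ 2 ∈ S := ⟨G, hG, rfl⟩
  have hS_nonneg : ∀ x ∈ S, 0 ≤ x := by
    rintro x ⟨G', -, rfl⟩
    positivity
  have hinf_nonneg : 0 ≤ sInf S := le_csInf ⟨_, hSG⟩ hS_nonneg
  have hinf_le : sInf S ≤ ∑ i ∈ G, y i ^ 2 := csInf_le ⟨0, hS_nonneg⟩ hSG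
  rw [sigmahat, mul_pow, Real.sq_sqrt (by positivity), div_eq_inv_mul, hG]
  gcongr
  norm_num

lemma sigmahat_pow_four_le {d : ℕ} (y : Fin d → ℝ) {G : Finset (Fin d)} (hG : #G = d / 2) :
    sigmahat d y ^ 4 ≤ 81 ^ 2 * ((∑ i ∈ G, y i ^ 4) / #G) := by
  calc sigmahat d y ^ 4 = (sigmahat d y ^ 2) ^ 2 := by ring
    _ ≤ (81 * ((∑ i ∈ G, y i ^ 2) / #G)) ^ 2 := by gcongr; exact sq_sigmahat_le y hG
    _ = 81 ^ 2 * ((∑ i ∈ G, y i ^ 2) / #G) ^ 2 := by ring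
    _ ≤ 81 ^ 2 * ((∑ i ∈ G, (y i ^ 2) ^ 2) / #G) := by
      gcongr; exact sum_div_card_sq_le_sum_sq_div_card
    _ = 81 ^ 2 * ((∑ i ∈ G, y i ^ 4) / #G) := by simp only [← pow_mul]

lemma pow_four_LhatS'_sub_Lfun_le (d : ℕ) (α : ℝ) (s : ℕ) (y θ : Fin d → ℝ) :
    (LhatS' d α s y - Lfun d θ) ^ 4
      ≤ 8 * ((d : ℝ) ^ 3 * ∑ j, (y j - θ j) ^ 4 + (d : ℝ) ^ 4 *
        (α * Real.log (1 + (d : ℝ) * Real.log d / (s : ℝ) ^ 2)) ^ 2 * sigmahat d y ^ 4) := by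
  rw [LhatS', Lfun]
  split_ifs
  · convert pow_four_sum_ite_lt_sq_sub_le _ y θ using 3 <;> simp only [Fintype.card_fin]
    ring
  · have hsum : (∑ j, y j - ∑ j, θ j) ^ 4 ≤ (d : ℝ) ^ 3 * ∑ j, (y j - θ j) ^ 4 := by
      simpa [sum_sub_distrib] using
        pow_sum_le_card_pow_mul_sum_pow_of_odd univ (fun j => y j - θ j) (n := 3) (by decide)
    have hsum_nonneg : 0 ≤ (d : ℝ) ^ 3 * ∑ j, (y j - θ j) ^ 4 := by positivity
    have hthreshold_nonneg : 0 ≤ (d : ℝ) ^ 4 *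
        (α * Real.log (1 + (d : ℝ) * Real.log d / (s : ℝ) ^ 2)) ^ 2 * sigmahat d y ^ 4 := by
      positivity
    linarith

lemma integrable_sub_pow_gaussianReal (μ : ℝ) (v : ℝ≥0) (n : ℕ) :
    Integrable (fun x => (x - μ) ^ n) (gaussianReal μ v) := by
  refine (((memLp_id_gaussianReal n).sub (memLp_const μ)).integrable_norm_pow').mono'
    (by fun_prop) (ae_of_all _ fun x => ?_)
  simp [norm_pow]

lemma integral_sub_pow_gaussianReal (μ : ℝ) (v : ℝ≥0) (n : ℕ) :
    ∫ x, (x - μ) ^ n ∂gaussianReal μ v = √(v : ℝ) ^ n * ∫ x, x ^ n ∂gaussianReal 0 1 := by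
  have hshift : (gaussianReal 0 v).map (· + μ) = gaussianReal μ v := by
    rw [gaussianReal_map_add_const, zero_add]
  have hscale : (gaussianReal 0 1).map (√(v : ℝ) * ·) = gaussianReal 0 v := by
    rw [gaussianReal_map_const_mul, mul_zero, mul_one]
    congr 1
    ext
    simp
  rw [← hshift, integral_map (by fun_prop) (by fun_prop), ← hscale,
    integral_map (by fun_prop) (by fun_prop), ← integral_const_mul]
  simp only [add_sub_cancel_right, mul_pow]

lemma lintegral_ofReal_le_ofReal_integral {Ω : Type*} [MeasurableSpace Ω] {μ : Measure Ω}
    {f g : Ω → ℝ} (hf : ∀ x, 0 ≤ f x) (hfg : ∀ x, f x ≤ g x) (hg : Integrable g μ) :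
    ∫⁻ x, ENNReal.ofReal (f x) ∂μ ≤ ENNReal.ofReal (∫ x, g x ∂μ) := by
  rw [ofReal_integral_eq_lintegral_ofReal hg (ae_of_all _ fun x => (hf x).trans (hfg x))]
  exact lintegral_mono fun x => ENNReal.ofReal_le_ofReal (hfg x)

section gaussMeasure

variable {d : ℕ} (θ : Fin d → ℝ) (σ : ℝ)

lemma integrable_sub_pow_gaussMeasure (j : Fin d) (n : ℕ) :
    Integrable (fun y => (y j - θ j) ^ n) (gaussMeasure d θ σ) :=
  integrable_comp_eval (X := fun _ => ℝ) (f := fun x => (x - θ j) ^ n)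
    (integrable_sub_pow_gaussianReal _ _ n)

lemma integral_sub_pow_four_gaussMeasure (j : Fin d) :
    ∫ y, (y j - θ j) ^ 4 ∂gaussMeasure d θ σ = σ ^ 4 * ∫ x, x ^ 4 ∂gaussianReal 0 1 := by
  rw [gaussMeasure, integral_comp_eval (X := fun _ => ℝ) (f := fun x => (x - θ j) ^ 4)
    (by fun_prop), integral_sub_pow_gaussianReal, Real.coe_toNNReal _ (sq_nonneg σ),
    Real.sqrt_sq_eq_abs, (by decide : Even 4).pow_abs]

lemma integral_sum_sub_pow_four_gaussMeasure (S : Finset (Fin d)) :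
    ∫ y, ∑ j ∈ S, (y j - θ j) ^ 4 ∂gaussMeasure d θ σ
      = #S * (σ ^ 4 * ∫ x, x ^ 4 ∂gaussianReal 0 1) := by
  rw [integral_finsetSum S fun j _ => integrable_sub_pow_gaussMeasure θ σ j 4]
  simp [integral_sub_pow_four_gaussMeasure]

end gaussMeasure

lemma exists_card_eq_forall_eq_zero_of_mem_Theta {d s m : ℕ} {θ : Fin d → ℝ}
    (hθ : θ ∈ Theta d s) (hm : s + m ≤ d) : ∃ G : Finset (Fin d), #G = m ∧ ∀ i ∈ G, θ i = 0 := by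
  have hsupport : #{j | ¬θ j = 0} ≤ s := by
    simpa [Theta, ← Set.ncard_coe_finset] using hθ
  have hzeros : m ≤ #{j | θ j = 0} := by
    have := card_filter_add_card_filter_not (s := univ) (fun j => θ j = 0)
    simp only [card_univ, Fintype.card_fin] at this
    omega
  obtain ⟨G, hGsub, hG⟩ := exists_subset_card_eq hzeros
  exact ⟨G, hG, fun i hi => (mem_filter.mp (hGsub hi)).2⟩

lemma add_half_le_of_le_floor_sqrt {d s : ℕ} (hd : 256 ≤ d)
    (hs : s ≤ ⌊√((d : ℝ) * Real.log d / 2)⌋₊ + 1) : s + d / 2 ≤ d := by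
  have hd' : (256 : ℝ) ≤ d := by exact_mod_cast hd
  have hsqrt : 16 ≤ √(d : ℝ) := Real.le_sqrt_of_sq_le (by linarith)
  have hlog : Real.log d ≤ d / 8 := by
    have h := Real.log_le_sub_one_of_pos (Real.sqrt_pos.mpr (by linarith : (0 : ℝ) < d))
    rw [Real.log_sqrt (by linarith)] at h
    nlinarith [Real.sq_sqrt (by linarith : (0 : ℝ) ≤ d)]
  have hroot : √((d : ℝ) * Real.log d / 2) ≤ d / 4 := by
    rw [Real.sqrt_le_left (by positivity)]
    nlinarith
  have hs' : (s : ℝ) ≤ d / 4 + 1 := by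
    have := Nat.floor_le (Real.sqrt_nonneg ((d : ℝ) * Real.log d / 2))
    have : (s : ℝ) ≤ ⌊√((d : ℝ) * Real.log d / 2)⌋₊ + 1 := by exact_mod_cast hs
    linarith
  have hhalf : ((d / 2 : ℕ) : ℝ) ≤ d / 2 := Nat.cast_div_le
  have : (s : ℝ) + (d / 2 : ℕ) ≤ d := by linarith
  exact_mod_cast this

lemma log_one_add_div_sq_le {d s : ℕ} (hs : 1 ≤ s) :
    Real.log (1 + (d : ℝ) * Real.log d / (s : ℝ) ^ 2) ≤ 2 * Real.log d := by
  rcases Nat.eq_zero_or_pos d with rfl | hd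
  · simp
  have hd' : (1 : ℝ) ≤ d := by exact_mod_cast hd
  have hs' : (1 : ℝ) ≤ (s : ℝ) ^ 2 := by exact_mod_cast Nat.one_le_pow _ _ hs
  have hlog := Real.log_le_sub_one_of_pos (by linarith : (0 : ℝ) < d)
  have hlog_nonneg := Real.log_natCast_nonneg d
  have hbound : 1 + (d : ℝ) * Real.log d / (s : ℝ) ^ 2 ≤ (d : ℝ) ^ 2 :=
    calc 1 + (d : ℝ) * Real.log d / (s : ℝ) ^ 2 ≤ 1 + d * Real.log d := by
          gcongr; exact div_le_self (by positivity) hs'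
      _ ≤ (d : ℝ) ^ 2 := by nlinarith
  calc _ ≤ Real.log ((d : ℝ) ^ 2) := Real.log_le_log (by positivity) hbound
    _ = 2 * Real.log d := by rw [Real.log_pow]; norm_num

lemma log_one_add_div_sq_nonneg (d s : ℕ) :
    0 ≤ Real.log (1 + (d : ℝ) * Real.log d / (s : ℝ) ^ 2) := by
  have := Real.log_natCast_nonneg d
  exact Real.log_nonneg (by simp only [le_add_iff_nonneg_right]; positivity)

lemma pow_four_LhatS'_sub_Lfun_le_of_eq_zero {d : ℕ} {α : ℝ} {s : ℕ} {θ : Fin d → ℝ}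
    {G : Finset (Fin d)} (hα : 0 ≤ α) (hs : 1 ≤ s) (hG : #G = d / 2) (hθG : ∀ i ∈ G, θ i = 0)
    (y : Fin d → ℝ) :
    (LhatS' d α s y - Lfun d θ) ^ 4 ≤ 8 * (d : ℝ) ^ 3 * ∑ j, (y j - θ j) ^ 4
      + 8 * (d : ℝ) ^ 4 * (162 * α * Real.log d) ^ 2 / #G * ∑ i ∈ G, (y i - θ i) ^ 4 := by
  have hthreshold : (α * Real.log (1 + (d : ℝ) * Real.log d / (s : ℝ) ^ 2)) ^ 2
      ≤ (2 * α * Real.log d) ^ 2 := by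
    have hle := log_one_add_div_sq_le (d := d) hs
    have hnonneg := log_one_add_div_sq_nonneg d s
    exact pow_le_pow_left₀ (by positivity) (by nlinarith) 2
  have hnoise : ∑ i ∈ G, y i ^ 4 = ∑ i ∈ G, (y i - θ i) ^ 4 :=
    sum_congr rfl fun i hi => by rw [hθG i hi, sub_zero]
  calc _ ≤ 8 * ((d : ℝ) ^ 3 * ∑ j, (y j - θ j) ^ 4 + (d : ℝ) ^ 4 *
        (α * Real.log (1 + (d : ℝ) * Real.log d / (s : ℝ) ^ 2)) ^ 2 * sigmahat d y ^ 4) :=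
        pow_four_LhatS'_sub_Lfun_le d α s y θ
    _ ≤ 8 * ((d : ℝ) ^ 3 * ∑ j, (y j - θ j) ^ 4 + (d : ℝ) ^ 4 *
        (2 * α * Real.log d) ^ 2 * (81 ^ 2 * ((∑ i ∈ G, y i ^ 4) / #G))) := by
        gcongr
        exact sigmahat_pow_four_le y hG
    _ = _ := by rw [hnoise]; ring

lemma lintegral_ofReal_le_of_le_sum_sub_pow_four {d : ℕ} (θ : Fin d → ℝ) (σ : ℝ)
    (G : Finset (Fin d)) {F : (Fin d → ℝ) → ℝ} {a b : ℝ} (hF : ∀ y, 0 ≤ F y)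
    (hF_le : ∀ y, F y ≤ a * ∑ j, (y j - θ j) ^ 4 + b * ∑ i ∈ G, (y i - θ i) ^ 4) :
    ∫⁻ y, ENNReal.ofReal (F y) ∂gaussMeasure d θ σ
      ≤ ENNReal.ofReal ((a * d + b * #G) * σ ^ 4 * ∫ x, x ^ 4 ∂gaussianReal 0 1) := by
  have hintegrable : ∀ S : Finset (Fin d),
      Integrable (fun y => ∑ j ∈ S, (y j - θ j) ^ 4) (gaussMeasure d θ σ) :=
    fun S => integrable_finsetSum S fun j _ => integrable_sub_pow_gaussMeasure θ σ j 4
  have hbound := ((hintegrable univ).const_mul a).add ((hintegrable G).const_mul b)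
  refine (lintegral_ofReal_le_ofReal_integral hF hF_le hbound).trans_eq ?_
  rw [integral_add ((hintegrable univ).const_mul a) ((hintegrable G).const_mul b),
    integral_const_mul, integral_const_mul, integral_sum_sub_pow_four_gaussMeasure,
    integral_sum_sub_pow_four_gaussMeasure, card_univ, Fintype.card_fin]
  ring_nf

/-- Lemma 1 (second bound): for all `s ≤ ⌊√(d log d / 2)⌋ + 1`,
`E_θ (L̂'_s - L)⁴ ≤ c σ⁴ d⁴ (log d)²` uniformly over `Θ_s`. -/
theorem fourth_moment_LhatS' :
    ∀ α : ℝ, 0 < α → ∃ c : ℝ, 0 < c ∧ ∃ d0 : ℕ, 3 ≤ d0 ∧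
      ∀ d : ℕ, d0 ≤ d → ∀ σ : ℝ, 0 < σ →
        ∀ s : ℕ, 1 ≤ s → s ≤ Nat.floor (Real.sqrt ((d : ℝ) * Real.log d / 2)) + 1 →
          ∀ θ ∈ Theta d s,
            ∫⁻ y, ENNReal.ofReal ((LhatS' d α s y - Lfun d θ) ^ 4) ∂(gaussMeasure d θ σ)
              ≤ ENNReal.ofReal (c * σ ^ 4 * (d : ℝ) ^ 4 * (Real.log d) ^ 2) := by
  intro α hα
  set M := ∫ x, x ^ 4 ∂gaussianReal 0 1
  have hM : 0 ≤ M := integral_nonneg fun x => by positivity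
  refine ⟨8 * (1 + (162 * α) ^ 2) * (M + 1), by positivity, 256, by norm_num, ?_⟩
  intro d hd σ _ s hs₁ hs₂ θ hθ
  obtain ⟨G, hG, hθG⟩ :=
    exists_card_eq_forall_eq_zero_of_mem_Theta hθ (add_half_le_of_le_floor_sqrt hd hs₂)
  have hG_pos : (0 : ℝ) < #G := by rw [hG]; exact_mod_cast (by omega : 0 < d / 2)
  have hlog : 1 ≤ Real.log d := by
    rw [Real.le_log_iff_exp_le (by positivity)]
    have : (256 : ℝ) ≤ d := by exact_mod_cast hd
    linarith [Real.exp_one_lt_d9]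
  refine (lintegral_ofReal_le_of_le_sum_sub_pow_four θ σ G (fun y => by positivity)
    (pow_four_LhatS'_sub_Lfun_le_of_eq_zero hα.le hs₁ hG hθG)).trans
      (ENNReal.ofReal_le_ofReal ?_)
  calc _ = 8 * σ ^ 4 * (d : ℝ) ^ 4 * M * (1 + (162 * α) ^ 2 * Real.log d ^ 2) := by
        simp only [M]; field_simp
    _ ≤ 8 * σ ^ 4 * (d : ℝ) ^ 4 * (M + 1) * ((1 + (162 * α) ^ 2) * Real.log d ^ 2) := by
        gcongr
        · linarith
        · nlinarith
    _ = _ := by ring
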